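/- arXiv:2505.10178 — 2 statements merged into one kernel-verified Lean document; each statement's English description precedes it below -/
import Mathlib

section
/- Let A₁, A₂ be real s×s matrices all of whose entries are nonnegative integers. If JSR(A₁, A₂) ≤ 1, then the pair (A₁, A₂) has the finiteness property. -/
/-!
If every word of length `s + 1` vanishes, the joint spectral radius is `0` and any such word
realises it. Otherwise a nonzero product of `s + 1` nonnegative-integer matrices has a path of
`s + 1` nonzero entries through `s` indices, which must close a cycle: a subword `P` with
`P i i ≥ 1`. Then `(P ^ k) i i ≥ 1` for all `k`, so `ρ(P) ≥ 1` by Gelfand's formula, while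
`ρ(P) ^ (1 / |P|) ≤ JSR ≤ 1` holds for every word. Hence `ρ(P) ^ (1 / |P|) = 1 = JSR`.
-/

open Matrix

/-- Operator norm on real s×s matrices induced by the Euclidean norm. -/
noncomputable def l2OpNorm {s : ℕ} (A : Matrix (Fin s) (Fin s) ℝ) : ℝ :=
  ‖Matrix.toEuclideanCLM (𝕜 := ℝ) A‖

/-- Spectral radius of a real matrix viewed as a complex matrix. -/
noncomputable def specRad {s : ℕ} (A : Matrix (Fin s) (Fin s) ℝ) : ℝ :=
  (spectralRadius ℂ (A.map (Complex.ofReal : ℝ → ℂ))).toReal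

/-- The ordered product `A (w (n-1)) * ⋯ * A (w 0)`. -/
noncomputable def wordProd {s J n : ℕ} (A : Fin J → Matrix (Fin s) (Fin s) ℝ)
    (w : Fin n → Fin J) : Matrix (Fin s) (Fin s) ℝ :=
  ((List.ofFn fun i => A (w i)).reverse).prod

/-- Joint spectral radius of a finite family of real s×s matrices. -/
noncomputable def JSR {s J : ℕ} (A : Fin J → Matrix (Fin s) (Fin s) ℝ) : ℝ :=
  ⨅ n : {m : ℕ // 1 ≤ m}, ⨆ w : Fin (n : ℕ) → Fin J,
    l2OpNorm (wordProd A w) ^ (1 / ((n : ℕ) : ℝ))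

/-- The pair has the finiteness property. -/
def FinitenessProperty {s : ℕ} (A : Fin 2 → Matrix (Fin s) (Fin s) ℝ) : Prop :=
  ∃ n : ℕ, 1 ≤ n ∧ ∃ w : Fin n → Fin 2,
    specRad (wordProd A w) ^ (1 / (n : ℝ)) = JSR A


namespace Matrix

variable {n : Type*} [Fintype n] [DecidableEq n]

theorem norm_apply_le_norm_toEuclideanCLM {𝕜 : Type*} [RCLike 𝕜] (M : Matrix n n 𝕜) (i j : n) :
    ‖M i j‖ ≤ ‖toEuclideanCLM (𝕜 := 𝕜) M‖ := by
  have hcol : toEuclideanCLM (𝕜 := 𝕜) M (EuclideanSpace.single j 1) =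
      WithLp.toLp 2 (M.col j) := by
    rw [← mulVec_single_one]; rfl
  calc ‖M i j‖ = ‖toEuclideanCLM (𝕜 := 𝕜) M (EuclideanSpace.single j 1) i‖ := by rw [hcol]; rfl
    _ ≤ ‖toEuclideanCLM (𝕜 := 𝕜) M (EuclideanSpace.single j 1)‖ := PiLp.norm_apply_le _ _
    _ ≤ ‖toEuclideanCLM (𝕜 := 𝕜) M‖ := by
      simpa using (toEuclideanCLM (𝕜 := 𝕜) M).le_opNorm (EuclideanSpace.single j 1)

/-- Splitting `z = x + i y` gives `‖M z‖² = ‖M x‖² + ‖M y‖² ≤ ‖M‖² (‖x‖² + ‖y‖²) = ‖M‖² ‖z‖²`. -/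
theorem norm_toEuclideanCLM_map_ofReal_le (M : Matrix n n ℝ) :
    ‖toEuclideanCLM (𝕜 := ℂ) (M.map Complex.ofReal)‖ ≤ ‖toEuclideanCLM (𝕜 := ℝ) M‖ := by
  refine ContinuousLinearMap.opNorm_le_bound _ (norm_nonneg _) fun z => ?_
  set x : EuclideanSpace ℝ n := WithLp.toLp 2 fun i => (z i).re
  set y : EuclideanSpace ℝ n := WithLp.toLp 2 fun i => (z i).im
  have hsplit : ∀ i, toEuclideanCLM (𝕜 := ℂ) (M.map Complex.ofReal) z i =
      (toEuclideanCLM (𝕜 := ℝ) M x i : ℂ) + (toEuclideanCLM (𝕜 := ℝ) M y i : ℂ) * Complex.I := by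
    intro i
    apply Complex.ext <;> simp [x, y, mulVec, dotProduct]
  have hz : ‖z‖ ^ 2 = ‖x‖ ^ 2 + ‖y‖ ^ 2 := by
    simp only [EuclideanSpace.norm_sq_eq, ← Finset.sum_add_distrib, Complex.sq_norm,
      Complex.normSq_apply, Real.norm_eq_abs, sq_abs, x, y]
    exact Finset.sum_congr rfl fun i _ => by ring
  have hMz : ‖toEuclideanCLM (𝕜 := ℂ) (M.map Complex.ofReal) z‖ ^ 2 =
      ‖toEuclideanCLM (𝕜 := ℝ) M x‖ ^ 2 + ‖toEuclideanCLM (𝕜 := ℝ) M y‖ ^ 2 := by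
    simp only [EuclideanSpace.norm_sq_eq, ← Finset.sum_add_distrib, hsplit, Complex.sq_norm,
      Complex.normSq_add_mul_I, Real.norm_eq_abs, sq_abs]
  refine le_of_pow_le_pow_left₀ two_ne_zero (by positivity) ?_
  rw [hMz, mul_pow, hz, mul_add]
  gcongr <;> rw [← mul_pow] <;> gcongr <;> exact (toEuclideanCLM (𝕜 := ℝ) M).le_opNorm _

theorem map_ofReal_pow (M : Matrix n n ℝ) (k : ℕ) :
    (M ^ k).map Complex.ofReal = M.map Complex.ofReal ^ k :=
  map_pow Complex.ofRealHom.mapMatrix M k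

theorem apply_self_pow_le_pow_apply_self {R : Type*} [Semiring R] [PartialOrder R]
    [IsOrderedRing R] {M : Matrix n n R} (hM : ∀ i j, 0 ≤ M i j) (k : ℕ) (i : n) :
    M i i ^ k ≤ (M ^ k) i i := by
  induction k with
  | zero => simp
  | succ k ih =>
    rw [pow_succ, pow_succ, mul_apply]
    calc M i i ^ k * M i i ≤ (M ^ k) i i * M i i := by gcongr; exact hM i i
      _ ≤ ∑ m, (M ^ k) i m * M m i :=
        Finset.single_le_sum (f := fun m => (M ^ k) i m * M m i)
          (fun m _ => mul_nonneg (pow_apply_nonneg hM k i m) (hM m i)) (Finset.mem_univ i)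

end Matrix

/-- Unlike `spectrum.spectralRadius_le_nnnorm`, this needs no `NormOneClass`, so it also covers
the zero space. -/
theorem ContinuousLinearMap.spectralRadius_le_nnnorm {𝕜 E : Type*} [NontriviallyNormedField 𝕜]
    [NormedAddCommGroup E] [NormedSpace 𝕜 E] [CompleteSpace E] (T : E →L[𝕜] E) :
    spectralRadius 𝕜 T ≤ ‖T‖₊ := by
  have h := spectrum.spectralRadius_le_pow_nnnorm_pow_one_div 𝕜 T 0
  simp only [zero_add, pow_one, Nat.cast_zero, div_one, ENNReal.rpow_one] at h
  refine h.trans (mul_le_of_le_one_right' ?_)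
  exact_mod_cast ContinuousLinearMap.norm_id_le

section Norms

variable {s : ℕ}

theorem l2OpNorm_nonneg (M : Matrix (Fin s) (Fin s) ℝ) : 0 ≤ l2OpNorm M := norm_nonneg _

@[simp] theorem l2OpNorm_zero : l2OpNorm (0 : Matrix (Fin s) (Fin s) ℝ) = 0 := by
  simp [l2OpNorm]

theorem l2OpNorm_one_le : l2OpNorm (1 : Matrix (Fin s) (Fin s) ℝ) ≤ 1 := by
  rw [l2OpNorm, map_one]
  exact ContinuousLinearMap.norm_id_le

theorem l2OpNorm_mul_le (M N : Matrix (Fin s) (Fin s) ℝ) :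
    l2OpNorm (M * N) ≤ l2OpNorm M * l2OpNorm N := by
  simpa only [l2OpNorm, map_mul] using norm_mul_le _ _

theorem specRad_eq_toReal_spectralRadius (M : Matrix (Fin s) (Fin s) ℝ) :
    specRad M = (spectralRadius ℂ (toEuclideanCLM (𝕜 := ℂ) (M.map Complex.ofReal))).toReal := by
  simp only [specRad, spectralRadius, AlgEquiv.spectrum_eq]

theorem specRad_nonneg (M : Matrix (Fin s) (Fin s) ℝ) : 0 ≤ specRad M := ENNReal.toReal_nonneg

@[simp] theorem specRad_zero : specRad (0 : Matrix (Fin s) (Fin s) ℝ) = 0 := by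
  simp [specRad]

theorem specRad_pow_le_l2OpNorm_pow (M : Matrix (Fin s) (Fin s) ℝ) {k : ℕ} (hk : k ≠ 0) :
    specRad M ^ k ≤ l2OpNorm (M ^ k) := by
  have hρ : spectralRadius ℂ (M.map Complex.ofReal) ^ k ≤
      ‖toEuclideanCLM (𝕜 := ℂ) ((M ^ k).map Complex.ofReal)‖₊ :=
    calc spectralRadius ℂ (M.map Complex.ofReal) ^ k
        ≤ spectralRadius ℂ (M.map Complex.ofReal ^ k) := spectrum.spectralRadius_pow_le _ k hk
      _ = spectralRadius ℂ (toEuclideanCLM (𝕜 := ℂ) ((M ^ k).map Complex.ofReal)) := by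
        simp only [spectralRadius, AlgEquiv.spectrum_eq, map_ofReal_pow]
      _ ≤ _ := ContinuousLinearMap.spectralRadius_le_nnnorm _
  calc specRad M ^ k ≤ ‖toEuclideanCLM (𝕜 := ℂ) ((M ^ k).map Complex.ofReal)‖ := by
        rw [specRad, ← ENNReal.toReal_pow]
        exact ENNReal.toReal_le_of_le_ofReal (norm_nonneg _) (by rwa [ofReal_norm, enorm_eq_nnnorm])
    _ ≤ l2OpNorm (M ^ k) := norm_toEuclideanCLM_map_ofReal_le _

theorem apply_self_le_specRad {M : Matrix (Fin s) (Fin s) ℝ} (hM : ∀ i j, 0 ≤ M i j)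
    (i : Fin s) : M i i ≤ specRad M := by
  set T := toEuclideanCLM (𝕜 := ℂ) (M.map Complex.ofReal)
  have hpow (k : ℕ) : M i i ^ k ≤ ‖T ^ k‖ :=
    calc M i i ^ k ≤ ‖(M ^ k).map Complex.ofReal i i‖ := by
          simpa using (apply_self_pow_le_pow_apply_self hM k i).trans (le_abs_self _)
      _ ≤ ‖T ^ k‖ := by
          rw [← map_pow, ← map_ofReal_pow]; exact norm_apply_le_norm_toEuclideanCLM _ i i
  have hle : ENNReal.ofReal (M i i) ≤ spectralRadius ℂ T := by
    refine ge_of_tendsto (spectrum.pow_nnnorm_pow_one_div_tendsto_nhds_spectralRadius T)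
      (Filter.eventually_atTop.mpr ⟨1, fun k hk => ?_⟩)
    calc ENNReal.ofReal (M i i) = (ENNReal.ofReal (M i i) ^ k) ^ (1 / k : ℝ) := by
          rw [one_div, ENNReal.pow_rpow_inv_natCast (by omega)]
      _ ≤ (‖T ^ k‖₊ : ENNReal) ^ (1 / k : ℝ) := by
          gcongr
          rw [← ENNReal.ofReal_pow (hM i i)]
          exact ENNReal.ofReal_le_of_le_toReal (by simpa using hpow k)
  have hfin : spectralRadius ℂ T ≠ ⊤ :=
    ne_top_of_le_ne_top ENNReal.coe_ne_top (ContinuousLinearMap.spectralRadius_le_nnnorm T)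
  rw [specRad_eq_toReal_spectralRadius]
  exact (ENNReal.ofReal_le_iff_le_toReal hfin).mp hle

end Norms

section Words

variable {s J : ℕ} (A : Fin J → Matrix (Fin s) (Fin s) ℝ)

theorem wordProd_eq_prod_reverse {n : ℕ} (w : Fin n → Fin J) :
    wordProd A w = ((List.ofFn w).reverse.map A).prod := by
  rw [wordProd, List.map_reverse, List.map_ofFn]; rfl

theorem exists_wordProd_eq_prod (l : List (Fin J)) :
    ∃ w : Fin l.length → Fin J, wordProd A w = (l.map A).prod := by
  refine ⟨fun i => l.reverse[(i : ℕ)]'(by simp), ?_⟩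
  rw [wordProd_eq_prod_reverse]
  congr 3
  refine List.ext_getElem (by simp) fun i hi _ => ?_
  simp only [List.length_reverse, List.length_ofFn] at hi
  simp [show l.length - 1 - (l.length - 1 - i) = i by omega]

theorem l2OpNorm_prod_le_pow {N : ℕ} {c : ℝ}
    (hc : ∀ l : List (Fin J), l.length = N → l2OpNorm (l.map A).prod ≤ c) :
    ∀ (k : ℕ) (l : List (Fin J)), l.length = k * N → l2OpNorm (l.map A).prod ≤ c ^ k
  | 0, l, hl => by
    obtain rfl : l = [] := List.length_eq_zero_iff.mp (by simpa using hl)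
    simpa using l2OpNorm_one_le
  | k + 1, l, hl => by
    rw [← List.take_append_drop N l, List.map_append, List.prod_append, pow_succ']
    have hN := hc (l.take N) (by simp [hl, add_mul])
    exact (l2OpNorm_mul_le _ _).trans (mul_le_mul hN
      (l2OpNorm_prod_le_pow hc k _ (by simp [hl, add_mul])) (l2OpNorm_nonneg _)
      ((l2OpNorm_nonneg _).trans hN))

theorem JSR_nonneg : 0 ≤ JSR A :=
  Real.iInf_nonneg fun _ => Real.iSup_nonneg fun _ => Real.rpow_nonneg (l2OpNorm_nonneg _) _

theorem JSR_eq_zero_of_forall_wordProd_eq_zero {m : ℕ} (hm : 1 ≤ m)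
    (h : ∀ w : Fin m → Fin J, wordProd A w = 0) : JSR A = 0 := by
  refine le_antisymm ?_ (JSR_nonneg A)
  refine (ciInf_le ⟨0, ?_⟩ ⟨m, hm⟩).trans (Real.iSup_nonpos fun w => ?_)
  · rintro _ ⟨n, rfl⟩
    exact Real.iSup_nonneg fun _ => Real.rpow_nonneg (l2OpNorm_nonneg _) _
  · rw [h w, l2OpNorm_zero, Real.zero_rpow (by simp; omega)]

/-- If every word of length `N` has norm at most `c ^ N`, then splitting `P ^ N`, `P` of length
`n`, into `n` words of length `N` gives `ρ(P) ^ N ≤ ‖P ^ N‖ ≤ c ^ (n * N)`. -/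
theorem specRad_wordProd_rpow_le_JSR {n : ℕ} (hn : 1 ≤ n) (w : Fin n → Fin J) :
    specRad (wordProd A w) ^ (1 / (n : ℝ)) ≤ JSR A := by
  have : Nonempty {m : ℕ // 1 ≤ m} := ⟨⟨1, le_rfl⟩⟩
  refine le_ciInf fun N => ?_
  obtain ⟨N, hN⟩ := N
  set c := ⨆ v : Fin N → Fin J, l2OpNorm (wordProd A v) ^ (1 / (N : ℝ))
  have hc : 0 ≤ c := Real.iSup_nonneg fun _ => Real.rpow_nonneg (l2OpNorm_nonneg _) _
  have hblock : ∀ l : List (Fin J), l.length = N → l2OpNorm (l.map A).prod ≤ c ^ N := by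
    rintro l rfl
    obtain ⟨v, hv⟩ := exists_wordProd_eq_prod A l
    rw [← hv, ← Real.rpow_natCast, ← Real.rpow_inv_le_iff_of_pos (l2OpNorm_nonneg _) hc
      (by positivity), ← one_div]
    exact le_ciSup (f := fun v : Fin l.length → Fin J =>
      l2OpNorm (wordProd A v) ^ (1 / (l.length : ℝ))) (Finite.bddAbove_range _) v
  set l := (List.ofFn w).reverse
  have hpow : wordProd A w ^ N = ((List.replicate N l).flatten.map A).prod := by
    rw [wordProd_eq_prod_reverse, List.map_flatten, List.prod_flatten, List.map_replicate,
      List.map_replicate, List.prod_replicate]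
  have hnorm : specRad (wordProd A w) ^ N ≤ (c ^ n) ^ N :=
    calc specRad (wordProd A w) ^ N ≤ l2OpNorm (wordProd A w ^ N) :=
          specRad_pow_le_l2OpNorm_pow _ (by omega)
      _ ≤ (c ^ N) ^ n := by
          rw [hpow]; exact l2OpNorm_prod_le_pow A hblock n _ (by simp [l]; ring)
      _ = (c ^ n) ^ N := by ring
  rw [one_div, Real.rpow_inv_le_iff_of_pos (specRad_nonneg _) hc (by positivity),
    Real.rpow_natCast]
  exact le_of_pow_le_pow_left₀ (by omega) (by positivity) hnorm

end Words

section NatMatrices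

variable {s J : ℕ} (B : Fin J → Matrix (Fin s) (Fin s) ℕ)

theorem exists_path_of_prod_apply_ne_zero :
    ∀ (l : List (Fin J)) {i j : Fin s}, (l.map B).prod i j ≠ 0 →
      ∃ f : ℕ → Fin s, f 0 = i ∧ f l.length = j ∧
        ∀ k (hk : k < l.length), B l[k] (f k) (f (k + 1)) ≠ 0
  | [], i, j, h => by
    obtain rfl : i = j := by
      by_contra hij
      simp [Matrix.one_apply_ne hij] at h
    exact ⟨fun _ => i, rfl, rfl, fun k hk => absurd hk (Nat.not_lt_zero k)⟩
  | a :: l, i, j, h => by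
    rw [List.map_cons, List.prod_cons, Matrix.mul_apply] at h
    obtain ⟨m, -, hm⟩ := Finset.exists_ne_zero_of_sum_ne_zero h
    obtain ⟨f, hf0, hfl, hf⟩ := exists_path_of_prod_apply_ne_zero l (right_ne_zero_of_mul hm)
    refine ⟨fun | 0 => i | k + 1 => f k, rfl, hfl, fun k hk => ?_⟩
    cases k with
    | zero => simpa [hf0] using left_ne_zero_of_mul hm
    | succ k => exact hf k (by simpa using hk)

theorem prod_apply_ne_zero_of_path :
    ∀ (l : List (Fin J)) (f : ℕ → Fin s), (∀ k (hk : k < l.length), B l[k] (f k) (f (k + 1)) ≠ 0) →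
      (l.map B).prod (f 0) (f l.length) ≠ 0
  | [], f, _ => by simp
  | a :: l, f, hf => by
    rw [List.map_cons, List.prod_cons, Matrix.mul_apply]
    intro hsum
    refine mul_ne_zero (hf 0 (by simp)) ?_
      (Finset.sum_eq_zero_iff.mp hsum (f 1) (Finset.mem_univ _))
    exact prod_apply_ne_zero_of_path l (fun k => f (k + 1)) fun k hk =>
      hf (k + 1) (by simpa using hk)

theorem exists_prod_apply_self_ne_zero (l : List (Fin J)) (hl : s ≤ l.length)
    (h : (l.map B).prod ≠ 0) : ∃ l' : List (Fin J), l' ≠ [] ∧ ∃ i, (l'.map B).prod i i ≠ 0 := by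
  obtain ⟨i, j, hij⟩ : ∃ i j, (l.map B).prod i j ≠ 0 := by
    by_contra! h0
    exact h (Matrix.ext h0)
  obtain ⟨f, -, -, hf⟩ := exists_path_of_prod_apply_ne_zero B l hij
  have hcycle : ∀ a b : ℕ, a < b → b ≤ l.length → f a = f b →
      ∃ l' : List (Fin J), l' ≠ [] ∧ ∃ i, (l'.map B).prod i i ≠ 0 := by
    intro a b hab hb hfab
    set l' := (l.drop a).take (b - a)
    have hlen : l'.length = b - a := by simp [l']; omega
    refine ⟨l', List.ne_nil_of_length_pos (by omega), f a, ?_⟩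
    have := prod_apply_ne_zero_of_path B l' (fun k => f (a + k)) fun k hk => by
      simpa [l', ← add_assoc] using hf (a + k) (by omega)
    simpa [hlen, show a + (b - a) = b by omega, ← hfab] using this
  obtain ⟨a, b, hne, hfab⟩ := Fintype.exists_ne_map_eq_of_card_lt
    (fun k : Fin (l.length + 1) => f k) (by simp; omega)
  rcases lt_or_gt_of_ne (Fin.val_ne_of_ne hne) with hab | hab
  · exact hcycle a b hab (by omega) hfab
  · exact hcycle b a hab (by omega) hfab.symm

theorem map_natCast_list_prod (l : List (Fin J)) :
    ((l.map B).prod).map (Nat.cast : ℕ → ℝ) = (l.map fun t => (B t).map Nat.cast).prod := by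
  simpa [List.map_map, Function.comp_def] using
    map_list_prod (Nat.castRingHom ℝ).mapMatrix (l.map B)

end NatMatrices

theorem exists_specRad_rpow_eq_JSR_of_natCast {s J : ℕ} [NeZero J]
    (B : Fin J → Matrix (Fin s) (Fin s) ℕ)
    (hJSR : JSR (fun t => (B t).map (Nat.cast : ℕ → ℝ)) ≤ 1) :
    ∃ n : ℕ, 1 ≤ n ∧ ∃ w : Fin n → Fin J,
      specRad (wordProd (fun t => (B t).map (Nat.cast : ℕ → ℝ)) w) ^ (1 / (n : ℝ)) =
        JSR (fun t => (B t).map (Nat.cast : ℕ → ℝ)) := by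
  set A := fun t => (B t).map (Nat.cast : ℕ → ℝ)
  by_cases h0 : ∀ w : Fin (s + 1) → Fin J, wordProd A w = 0
  · refine ⟨s + 1, by omega, fun _ => 0, ?_⟩
    rw [h0, JSR_eq_zero_of_forall_wordProd_eq_zero A (by omega) h0, specRad_zero,
      Real.zero_rpow (by positivity)]
  obtain ⟨w₀, hw₀⟩ := not_forall.mp h0
  have hB : ((List.ofFn w₀).reverse.map B).prod ≠ 0 := by
    intro hzero
    apply hw₀
    rw [wordProd_eq_prod_reverse, ← map_natCast_list_prod, hzero, Matrix.map_zero _ Nat.cast_zero]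
  obtain ⟨l, hl, i, hi⟩ := exists_prod_apply_self_ne_zero B _ (by simp) hB
  obtain ⟨w, hw⟩ := exists_wordProd_eq_prod A l
  have hρ : 1 ≤ specRad (wordProd A w) := by
    rw [hw, ← map_natCast_list_prod]
    calc (1 : ℝ) ≤ ((l.map B).prod i i : ℝ) := by exact_mod_cast Nat.one_le_iff_ne_zero.mpr hi
      _ ≤ _ := apply_self_le_specRad (fun _ _ => Nat.cast_nonneg _) i
  have hn : 1 ≤ l.length := List.length_pos_iff.mpr hl
  refine ⟨l.length, hn, w, le_antisymm (specRad_wordProd_rpow_le_JSR A hn w) ?_⟩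
  exact hJSR.trans (Real.one_le_rpow hρ (by positivity))

/-- A pair of nonnegative-integer matrices with JSR at most one has the
finiteness property. -/
theorem finiteness_property_of_jsr_le_one {s : ℕ}
    (A₁ A₂ : Matrix (Fin s) (Fin s) ℝ)
    (h₁ : ∀ i j, ∃ k : ℕ, A₁ i j = k)
    (h₂ : ∀ i j, ∃ k : ℕ, A₂ i j = k)
    (hJSR : JSR ![A₁, A₂] ≤ 1) :
    FinitenessProperty ![A₁, A₂] := by
  choose B₁ hB₁ using h₁
  choose B₂ hB₂ using h₂
  have hA : ![A₁, A₂] = fun t => (![Matrix.of B₁, Matrix.of B₂] t).map (Nat.cast : ℕ → ℝ) := by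
    ext t i j
    fin_cases t <;> simp [hB₁, hB₂]
  rw [hA] at hJSR ⊢
  exact exists_specRad_rpow_eq_JSR_of_natCast _ hJSR
end

section
/- Let A₁ = [[0,1],[0,1]] and A₂ = [[1,0],[1,-1]] be real 2×2 matrices. Then JSR(A₁, A₂) = 1. -/
open Matrix

/-!
Every word product of the pair has both rows in `{(0,0), (0,1), (1,0), (1,-1)}`, a set preserved
by right multiplication with either matrix, so all word products have operator norm at most `2`
and `JSR ≤ lim 2 ^ (1/n) = 1`. Conversely the first matrix is a nonzero idempotent, so all its
powers have norm at least `1`, whence `JSR ≥ 1`.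
-/

lemma IsIdempotentElem.one_le_norm {R : Type*} [NormedRing R] {a : R} (ha : IsIdempotentElem a)
    (h0 : a ≠ 0) : 1 ≤ ‖a‖ := by
  have hpos : 0 < ‖a‖ := norm_pos_iff.mpr h0
  have : ‖a‖ ≤ ‖a‖ * ‖a‖ := by simpa only [ha.eq] using norm_mul_le a a
  nlinarith

lemma l2OpNorm_le_of_sum_sq_le {s : ℕ} (M : Matrix (Fin s) (Fin s) ℝ) {c : ℝ} (hc : 0 ≤ c)
    (h : ∑ i, ∑ j, M i j ^ 2 ≤ c ^ 2) : l2OpNorm M ≤ c := by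
  refine ContinuousLinearMap.opNorm_le_bound _ hc fun x => le_of_sq_le_sq ?_ (by positivity)
  calc ‖toEuclideanCLM (𝕜 := ℝ) M x‖ ^ 2 = ∑ i, (∑ j, M i j * x j) ^ 2 := by
        simp [EuclideanSpace.real_norm_sq_eq, mulVec, dotProduct]
    _ ≤ ∑ i, (∑ j, M i j ^ 2) * ∑ j, x j ^ 2 :=
        Finset.sum_le_sum fun i _ => Finset.sum_mul_sq_le_sq_mul_sq _ _ _
    _ = (∑ i, ∑ j, M i j ^ 2) * ‖x‖ ^ 2 := by
        rw [← Finset.sum_mul, EuclideanSpace.real_norm_sq_eq]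
    _ ≤ (c * ‖x‖) ^ 2 := by
        rw [mul_pow]
        gcongr

lemma one_le_l2OpNorm_of_isIdempotentElem {s : ℕ} {P : Matrix (Fin s) (Fin s) ℝ}
    (hP : IsIdempotentElem P) (h0 : P ≠ 0) : 1 ≤ l2OpNorm P :=
  (hP.map (toEuclideanCLM (n := Fin s) (𝕜 := ℝ))).one_le_norm
    ((map_ne_zero_iff _ (toEuclideanCLM (n := Fin s) (𝕜 := ℝ)).injective).mpr h0)

section JSR

variable {s J : ℕ} (A : Fin J → Matrix (Fin s) (Fin s) ℝ)

lemma wordProd_succ {n : ℕ} (w : Fin (n + 1) → Fin J) :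
    wordProd A w = wordProd A (fun i => w i.succ) * A (w 0) := by
  rw [wordProd, List.ofFn_succ, List.reverse_cons, List.prod_append, List.prod_singleton]
  rfl

lemma wordProd_const (n : ℕ) (j : Fin J) : wordProd A (fun _ : Fin n => j) = A j ^ n := by
  simp [wordProd, List.ofFn_const, List.prod_replicate]

lemma JSR_le_one_of_bounded (C : ℝ) (hC : ∀ n (w : Fin n → Fin J), l2OpNorm (wordProd A w) ≤ C) :
    JSR A ≤ 1 := by
  set D := max C 1
  have hD : 0 < D := lt_max_of_lt_right one_pos
  have hbdd : BddBelow (Set.range fun n : {m : ℕ // 1 ≤ m} => ⨆ w : Fin (n : ℕ) → Fin J,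
      l2OpNorm (wordProd A w) ^ (1 / ((n : ℕ) : ℝ))) := by
    refine ⟨0, ?_⟩
    rintro _ ⟨n, rfl⟩
    exact Real.iSup_nonneg fun w => Real.rpow_nonneg (norm_nonneg _) _
  have hJSR_le : ∀ k : ℕ, JSR A ≤ D ^ (1 / ((k + 1 : ℕ) : ℝ)) := fun k =>
    (ciInf_le hbdd ⟨k + 1, k.succ_pos⟩).trans <| Real.iSup_le (fun w =>
      Real.rpow_le_rpow (norm_nonneg _) ((hC _ w).trans (le_max_left _ _)) (by positivity))
      (by positivity)
  have hlim : Filter.Tendsto (fun k : ℕ => D ^ (1 / ((k + 1 : ℕ) : ℝ))) Filter.atTop (nhds 1) := by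
    have h0 : Filter.Tendsto (fun k : ℕ => 1 / ((k + 1 : ℕ) : ℝ)) Filter.atTop (nhds 0) := by
      simpa using tendsto_one_div_add_atTop_nhds_zero_nat (𝕜 := ℝ)
    simpa using tendsto_const_nhds.rpow h0 (Or.inl hD.ne')
  exact ge_of_tendsto' hlim hJSR_le

lemma one_le_JSR_of_forall_exists_word
    (h : ∀ n, 1 ≤ n → ∃ w : Fin n → Fin J, 1 ≤ l2OpNorm (wordProd A w)) : 1 ≤ JSR A := by
  refine le_ciInf fun n => ?_
  obtain ⟨w, hw⟩ := h n n.2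
  calc (1 : ℝ) ≤ l2OpNorm (wordProd A w) ^ (1 / ((n : ℕ) : ℝ)) :=
        Real.one_le_rpow hw (by positivity)
    _ ≤ _ := le_ciSup (f := fun w => l2OpNorm (wordProd A w) ^ (1 / ((n : ℕ) : ℝ)))
        (Set.finite_range _).bddAbove w

lemma one_le_JSR_of_isIdempotentElem (j : Fin J) (hP : IsIdempotentElem (A j)) (h0 : A j ≠ 0) :
    1 ≤ JSR A :=
  one_le_JSR_of_forall_exists_word A fun n hn => ⟨fun _ => j, by
    rw [wordProd_const, hP.pow_eq (by omega)]
    exact one_le_l2OpNorm_of_isIdempotentElem hP h0⟩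

end JSR

def tjsrPair : Fin 2 → Matrix (Fin 2) (Fin 2) ℝ :=
  ![!![0, 1; 0, 1], !![1, 0; 1, -1]]

/-- In the coordinates `(r 0, r 0 + r 1)`, right multiplication by `tjsrPair 0` acts as
`(a, b) ↦ (0, b)` and by `tjsrPair 1` as `(a, b) ↦ (b, a)`. -/
def IsTjsrRow (r : Fin 2 → ℝ) : Prop :=
  (r 0 = 0 ∨ r 0 = 1) ∧ (r 0 + r 1 = 0 ∨ r 0 + r 1 = 1)

lemma IsTjsrRow.vecMul {r : Fin 2 → ℝ} (hr : IsTjsrRow r) (j : Fin 2) :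
    IsTjsrRow (r ᵥ* tjsrPair j) := by
  obtain ⟨ha, hb⟩ := hr
  fin_cases j <;> simp [IsTjsrRow, tjsrPair, vecHead, vecTail] <;> grind

lemma IsTjsrRow.sq_add_sq_le {r : Fin 2 → ℝ} (hr : IsTjsrRow r) : r 0 ^ 2 + r 1 ^ 2 ≤ 2 := by
  obtain ⟨ha | ha, hb | hb⟩ := hr <;> nlinarith

lemma isTjsrRow_wordProd {n : ℕ} (w : Fin n → Fin 2) (i : Fin 2) :
    IsTjsrRow (wordProd tjsrPair w i) := by
  induction n with
  | zero => fin_cases i <;> simp [wordProd, IsTjsrRow]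
  | succ n ih =>
    rw [wordProd_succ, mul_apply_eq_vecMul]
    exact (ih _).vecMul _

lemma l2OpNorm_wordProd_tjsrPair_le {n : ℕ} (w : Fin n → Fin 2) :
    l2OpNorm (wordProd tjsrPair w) ≤ 2 := by
  refine l2OpNorm_le_of_sum_sq_le _ zero_le_two ?_
  have h0 := (isTjsrRow_wordProd w 0).sq_add_sq_le
  have h1 := (isTjsrRow_wordProd w 1).sq_add_sq_le
  simp only [Fin.sum_univ_two]
  linarith

lemma isIdempotentElem_tjsrPair_zero : IsIdempotentElem (tjsrPair 0) := by
  ext i j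
  fin_cases i <;> fin_cases j <;> simp [tjsrPair, mul_apply, Fin.sum_univ_two]

lemma tjsrPair_zero_ne_zero : tjsrPair 0 ≠ 0 := fun h => by
  simpa [tjsrPair] using congrFun (congrFun h 0) 1

/-- The JSR of the pair from Example `tjsr` equals 1. -/
theorem jsr_tjsr_example_eq_one :
    JSR ![!![(0:ℝ), 1; 0, 1], !![(1:ℝ), 0; 1, -1]] = 1 :=
  le_antisymm (JSR_le_one_of_bounded tjsrPair 2 fun _ => l2OpNorm_wordProd_tjsrPair_le)
    (one_le_JSR_of_isIdempotentElem tjsrPair 0 isIdempotentElem_tjsrPair_zero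
      tjsrPair_zero_ne_zero)
end
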